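/- If the acceptance formula Accept_A(u) for a sequence u = a₁...a_n is unsatisfiable, then the associated time-stamped interpolation problem Θ(u) = θ₀ ∧ θ₁ ∧ ... ∧ θ_n ∧ θ_{n+1} is unsatisfiable, where θ₀ = ι[Q₀/Q], the θ_k (1 ≤ k ≤ n) are the implication-form transition constraints, and θ_{n+1} = ⋀_{q∈Q∖F}(q_n → ⊥). -/
import Mathlib


/-- Positive Boolean formulas over variables `V` (occurring only positively)
and atoms `A` (which may occur negated, via `natom`). -/
inductive BForm (V A : Type) : Type
  | tru : BForm V A
  | fls : BForm V A
  | var (v : V) : BForm V A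
  | atom (a : A) : BForm V A
  | natom (a : A) : BForm V A
  | and (f g : BForm V A) : BForm V A
  | or (f g : BForm V A) : BForm V A

namespace BForm

variable {V A B W : Type}

/-- Satisfaction of a formula under a valuation `β` of the variables and `ι` of the atoms. -/
def Eval (β : V → Prop) (ι : A → Prop) : BForm V A → Prop
  | tru => True
  | fls => False
  | var v => β v
  | atom a => ι a
  | natom a => ¬ ι a
  | and f g => Eval β ι f ∧ Eval β ι g
  | or f g => Eval β ι f ∨ Eval β ι g

/-- The dual formula: swap `∧`/`∨`, fix variables, negate atoms. -/
def dual : BForm V A → BForm V A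
  | tru => fls
  | fls => tru
  | var v => var v
  | atom a => natom a
  | natom a => atom a
  | and f g => or (dual f) (dual g)
  | or f g => and (dual f) (dual g)

/-- Number of symbols of a formula. -/
def size : BForm V A → Nat
  | tru => 1
  | fls => 1
  | var _ => 1
  | atom _ => 1
  | natom _ => 1 + 1
  | and f g => size f + size g + 1
  | or f g => size f + size g + 1

/-- Simultaneous substitution of the variables by formulas. -/
def subst (Δ : V → BForm V A) : BForm V A → BForm V A
  | tru => tru
  | fls => fls
  | var v => Δ v
  | atom a => atom a
  | natom a => natom a
  | and f g => and (subst Δ f) (subst Δ g)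
  | or f g => or (subst Δ f) (subst Δ g)

/-- Renaming of variables. -/
def rename (h : V → W) : BForm V A → BForm W A
  | tru => tru
  | fls => fls
  | var v => var (h v)
  | atom a => atom a
  | natom a => natom a
  | and f g => and (rename h f) (rename h g)
  | or f g => or (rename h f) (rename h g)

/-- Renaming of atoms. -/
def mapAtom (h : A → B) : BForm V A → BForm V B
  | tru => tru
  | fls => fls
  | var v => var v
  | atom a => atom (h a)
  | natom a => natom (h a)
  | and f g => and (mapAtom h f) (mapAtom h g)
  | or f g => or (mapAtom h f) (mapAtom h g)

end BForm
/-- An alternating data automaton over states `Q`, input events `E`, data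
variables `X` and data domain `D`.  A transition formula is a positive Boolean
formula over the states whose atoms are constraints relating the previous
(`x̄`) and current (`x`) data valuations. -/
structure ADA (Q E X D : Type) where
  /-- the initial configuration `ι ∈ Form⁺(Q, ∅)` -/
  init : BForm Q Empty
  /-- the final states -/
  final : Q → Prop
  /-- the transition function `Δ` -/
  tr : Q → E → BForm Q ((X → D) → (X → D) → Prop)

namespace ADA

variable {Q Q₁ Q₂ E X D : Type}

/-- Top-down acceptance semantics: `Sem M w prev q` holds iff the automaton,
started in state `q` with previous data valuation `prev`, accepts the rest of
the data word `w`. -/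
def Sem (M : ADA Q E X D) : List (E × (X → D)) → (X → D) → Q → Prop
  | [], _, q => M.final q
  | (a, ν) :: w, prev, q =>
      BForm.Eval (fun q' => Sem M w ν q') (fun p => p prev ν) (M.tr q a)

/-- The language of an ADA: the initial data values are unconstrained. -/
def lang (M : ADA Q E X D) : Set (List (E × (X → D))) :=
  { w | ∃ ν₀ : X → D, BForm.Eval (fun q => Sem M w ν₀ q) Empty.elim M.init }

/-- The union automaton: disjoint union of states, disjunction of initial
configurations, union of final states and of transition functions. -/
def union (M₁ : ADA Q₁ E X D) (M₂ : ADA Q₂ E X D) : ADA (Q₁ ⊕ Q₂) E X D where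
  init := .or (M₁.init.rename Sum.inl) (M₂.init.rename Sum.inr)
  final := Sum.elim M₁.final M₂.final
  tr := fun q a =>
    match q with
    | .inl q => (M₁.tr q a).rename Sum.inl
    | .inr q => (M₂.tr q a).rename Sum.inr

/-- The intersection automaton: disjoint union of states, conjunction of
initial configurations, union of final states and of transition functions. -/
def inter (M₁ : ADA Q₁ E X D) (M₂ : ADA Q₂ E X D) : ADA (Q₁ ⊕ Q₂) E X D where
  init := .and (M₁.init.rename Sum.inl) (M₂.init.rename Sum.inr)
  final := Sum.elim M₁.final M₂.final
  tr := fun q a =>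
    match q with
    | .inl q => (M₁.tr q a).rename Sum.inl
    | .inr q => (M₂.tr q a).rename Sum.inr

/-- The complement automaton: dual initial configuration, complemented final
states, dual transition formulas. -/
def compl (M : ADA Q E X D) : ADA Q E X D where
  init := M.init.dual
  final := fun q => ¬ M.final q
  tr := fun q a => (M.tr q a).dual

end ADA
namespace ADA

variable {Q E X D : Type}

/-- Semantic configurations: sets of pairs of a Boolean valuation of the states
and a data valuation. -/
abbrev Conf (Q X D : Type) := (Q → Prop) → (X → D) → Prop

/-- The one-step post-image `Post_M(φ, a) = ∃x̄. Δ(φ[x̄/x], a)`: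
each state `q` of `φ` is replaced by `Δ(q,a)` and the previous data values are
projected out existentially. -/
def post (M : ADA Q E X D) (C : Conf Q X D) (a : E) : Conf Q X D :=
  fun β ν => ∃ νp : X → D,
    C (fun q => BForm.Eval β (fun p => p νp ν) (M.tr q a)) νp

/-- The post-image along a finite sequence of input events:
`Post_M(φ, ε) = φ` and `Post_M(φ, u·a) = Post_M(Post_M(φ, u), a)`. -/
def postSeq (M : ADA Q E X D) (C : Conf Q X D) (u : List E) : Conf Q X D :=
  u.foldl (post M) C

/-- The semantic configuration of the initial formula `ι` (no data constraints). -/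
def initConf (M : ADA Q E X D) : Conf Q X D :=
  fun β _ => BForm.Eval β Empty.elim M.init

/-- `Accept_M(u) = Post_M(ι,u) ∧ ⋀_{q ∈ Q∖F} (q → ⊥)`. -/
def AcceptF (M : ADA Q E X D) (u : List E) (β : Q → Prop) (ν : X → D) : Prop :=
  postSeq M (initConf M) u β ν ∧ ∀ q : Q, ¬ M.final q → ¬ β q

end ADA

theorem BForm.eval_mono {V A : Type} {β β' : V → Prop} {ι : A → Prop}
    (h : ∀ v, β v → β' v) : ∀ f : BForm V A, BForm.Eval β ι f → BForm.Eval β' ι f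
  | .tru, hf => hf
  | .fls, hf => hf
  | .var v, hf => h v hf
  | .atom _, hf => hf
  | .natom _, hf => hf
  | .and f g, hf => ⟨BForm.eval_mono h f hf.1, BForm.eval_mono h g hf.2⟩
  | .or f g, hf => hf.elim (fun hf => Or.inl (BForm.eval_mono h f hf))
      (fun hf => Or.inr (BForm.eval_mono h g hf))

/-- A configuration is monotone in the state valuation. -/
def ADA.Mono {Q X D : Type} (C : ADA.Conf Q X D) : Prop :=
  ∀ β β' ν, (∀ q, β q → β' q) → C β ν → C β' ν

theorem ADA.post_mono {Q E X D : Type} (M : ADA Q E X D) {C : ADA.Conf Q X D}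
    (hC : ADA.Mono C) (a : E) : ADA.Mono (ADA.post M C a) := by
  rintro β β' ν h ⟨νp, hp⟩
  exact ⟨νp, hC _ _ _ (fun q => BForm.eval_mono h _) hp⟩

theorem ADA.run_postSeq {Q E X D : Type} (M : ADA Q E X D) :
    ∀ (u : List E) (C : ADA.Conf Q X D), ADA.Mono C →
    ∀ (B : ℕ → Q → Prop) (σ : ℕ → X → D),
      C (B 0) (σ 0) →
      (∀ (k : ℕ) (hk : k < u.length), ∀ q : Q, B k q →
        BForm.Eval (B (k + 1)) (fun p => p (σ k) (σ (k + 1)))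
          (M.tr q (u.get ⟨k, hk⟩))) →
      ADA.postSeq M C u (B u.length) (σ u.length) := by
  intro u
  induction u with
  | nil => intro C _ B σ h0 _; exact h0
  | cons a u ih =>
      intro C hC B σ h0 hstep
      have h1 : ADA.post M C a (B 1) (σ 1) := by
        refine ⟨σ 0, hC (B 0) _ (σ 0) ?_ h0⟩
        intro q hq
        exact hstep 0 (by simp) q hq
      have := ih (ADA.post M C a) (ADA.post_mono M hC a)
        (fun k => B (k + 1)) (fun k => σ (k + 1)) h1
        (fun k hk q hq => hstep (k + 1) (by simpa using Nat.succ_lt_succ hk) q hq)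
      simpa [ADA.postSeq, List.length] using this

/-- If the acceptance formula `Accept_M(u)` is unsatisfiable
for `u = a₁…a_n`, then the associated time-stamped interpolation problem
`Θ(u) = θ₀ ∧ θ₁ ∧ … ∧ θ_n ∧ θ_{n+1}` is unsatisfiable, where `θ₀ = ι[Q₀/Q]`,
the `θ_k` are the implication-form transition constraints and
`θ_{n+1} = ⋀_{q∈Q∖F}(q_n → ⊥)`. -/
theorem theta_unsat_of_accept_unsat {Q E X D : Type} (M : ADA Q E X D)
    (u : List E)
    (h : ∀ (β : Q → Prop) (ν : X → D), ¬ ADA.AcceptF M u β ν) :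
    ¬ ∃ (B : ℕ → Q → Prop) (σ : ℕ → X → D),
        BForm.Eval (B 0) Empty.elim M.init ∧
        (∀ (k : ℕ) (hk : k < u.length), ∀ q : Q, B k q →
          BForm.Eval (B (k + 1)) (fun p => p (σ k) (σ (k + 1)))
            (M.tr q (u.get ⟨k, hk⟩))) ∧
        (∀ q : Q, ¬ M.final q → ¬ B u.length q) := by
  rintro ⟨B, σ, hinit, hstep, hfin⟩
  have hmono : ADA.Mono (ADA.initConf M) := fun β β' ν h hb =>
    BForm.eval_mono h _ hb
  have hpost := ADA.run_postSeq M u (ADA.initConf M) hmono B σ hinit hstep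
  exact h (B u.length) (σ u.length) ⟨hpost, hfin⟩
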